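/- arXiv:1410.1834 — 2 statements merged into one kernel-verified Lean document; each statement's English description precedes it below -/
import Mathlib

section
/- Let A be a real 2×2 matrix with ‖A‖ ≤ C (operator norm) and with two real eigenvalues λ₁, λ₂ having unit eigenvectors e₁, e₂ respectively, with e₁ ≠ ±e₂. Then |λ₁ - λ₂| ≤ 2C · min( ‖e₂ - e₁‖/‖e₁ + e₂‖ , ‖e₁ + e₂‖/‖e₁ - e₂‖ ). -/
open scoped RealInnerProductSpace

/-!
Put `u = e₁ + e₂` and `v = e₂ - e₁`. Since `‖e₁‖ = ‖e₂‖`, pairing `A u = λ₁ e₁ + λ₂ e₂` with `v`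
gives `⟪A u, v⟫ = (λ₂ - λ₁)/2 · ‖v‖²`, so Cauchy–Schwarz and `‖A‖ ≤ C` give
`|λ₁ - λ₂| ‖v‖² ≤ 2C ‖u‖ ‖v‖`. Replacing `e₁` by the eigenvector `-e₁` swaps the roles of `u` and
`v`, and the two inequalities together bound `|λ₁ - λ₂|` by both `2C ‖v‖/‖u‖` and `2C ‖u‖/‖v‖`.
This survives `e₁ = ±e₂`, where one ratio is a division by zero (hence `0`): the parallelogram law
`‖u‖² + ‖v‖² = 4` makes the other vector nonzero, and its inequality then forces `λ₁ = λ₂`.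
-/

lemma le_mul_div_of_mul_sq_le {a b d K : ℝ} (hb : 0 ≤ b) (hab : 0 < a ^ 2 + b ^ 2)
    (h₁ : d * b ^ 2 ≤ K * a * b) (h₂ : d * a ^ 2 ≤ K * b * a) : d ≤ K * (a / b) := by
  rcases hb.eq_or_lt with rfl | hb
  · have ha : 0 < a ^ 2 := by simpa using hab
    simp only [mul_zero, zero_mul, div_zero] at h₂ ⊢
    exact nonpos_of_mul_nonpos_left h₂ ha
  · rw [← mul_div_assoc, le_div_iff₀ hb]
    nlinarith

section Eigenvectors

variable {E : Type*} [NormedAddCommGroup E] [InnerProductSpace ℝ E]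

lemma inner_smul_add_smul_sub_of_norm_eq {e₁ e₂ : E} (h : ‖e₁‖ = ‖e₂‖) (lam₁ lam₂ : ℝ) :
    ⟪lam₁ • e₁ + lam₂ • e₂, e₂ - e₁⟫ = (lam₂ - lam₁) / 2 * ‖e₂ - e₁‖ ^ 2 := by
  rw [← real_inner_self_eq_norm_sq]
  simp only [inner_add_left, inner_sub_left, inner_sub_right, real_inner_smul_left,
    real_inner_self_eq_norm_sq, h, real_inner_comm e₁ e₂]
  ring

lemma abs_sub_mul_norm_sub_sq_le {A : E →L[ℝ] E} {C : ℝ} (hC : ‖A‖ ≤ C) {lam₁ lam₂ : ℝ}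
    {e₁ e₂ : E} (h : ‖e₁‖ = ‖e₂‖) (hAe₁ : A e₁ = lam₁ • e₁) (hAe₂ : A e₂ = lam₂ • e₂) :
    |lam₁ - lam₂| / 2 * ‖e₂ - e₁‖ ^ 2 ≤ C * ‖e₁ + e₂‖ * ‖e₂ - e₁‖ := by
  have hinner : ⟪A (e₁ + e₂), e₂ - e₁⟫ = (lam₂ - lam₁) / 2 * ‖e₂ - e₁‖ ^ 2 := by
    rw [map_add, hAe₁, hAe₂, inner_smul_add_smul_sub_of_norm_eq h]
  calc |lam₁ - lam₂| / 2 * ‖e₂ - e₁‖ ^ 2 = |⟪A (e₁ + e₂), e₂ - e₁⟫| := by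
        rw [hinner, abs_mul, abs_div, abs_two, abs_sq, abs_sub_comm]
    _ ≤ ‖A (e₁ + e₂)‖ * ‖e₂ - e₁‖ := abs_real_inner_le_norm _ _
    _ ≤ C * ‖e₁ + e₂‖ * ‖e₂ - e₁‖ := by
        gcongr
        exact A.le_of_opNorm_le hC _

end Eigenvectors

theorem stmt0_general (A : EuclideanSpace ℝ (Fin 2) →L[ℝ] EuclideanSpace ℝ (Fin 2)) (C : ℝ)
    (hC : ‖A‖ ≤ C) (lam₁ lam₂ : ℝ) (e₁ e₂ : EuclideanSpace ℝ (Fin 2))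
    (he₁ : ‖e₁‖ = 1) (he₂ : ‖e₂‖ = 1)
    (hAe₁ : A e₁ = lam₁ • e₁) (hAe₂ : A e₂ = lam₂ • e₂) :
    |lam₁ - lam₂| ≤ 2 * C * min (‖e₂ - e₁‖ / ‖e₁ + e₂‖) (‖e₁ + e₂‖ / ‖e₁ - e₂‖) := by
  have hnorm : ‖e₁‖ = ‖e₂‖ := he₁.trans he₂.symm
  have hv := abs_sub_mul_norm_sub_sq_le hC hnorm hAe₁ hAe₂
  have hu := abs_sub_mul_norm_sub_sq_le hC (e₁ := -e₁) (by rwa [norm_neg])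
    (by rw [map_neg, hAe₁, smul_neg]) hAe₂
  rw [sub_neg_eq_add, neg_add_eq_sub, add_comm e₂] at hu
  have hpos : 0 < ‖e₂ - e₁‖ ^ 2 + ‖e₁ + e₂‖ ^ 2 := by
    rw [add_comm e₁, add_comm, parallelogram_law_with_norm ℝ, he₁, he₂]
    norm_num
  rw [norm_sub_rev e₁, mul_assoc, ← div_le_iff₀' two_pos,
    mul_min_of_nonneg _ _ ((norm_nonneg A).trans hC)]
  refine le_min ?_ ?_
  · exact le_mul_div_of_mul_sq_le (norm_nonneg _) hpos hu hv
  · exact le_mul_div_of_mul_sq_le (norm_nonneg _) (by rwa [add_comm]) hv hu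

/-- For a linear operator `A` on the Euclidean plane with operator norm at most
`C`, having real eigenvalues `λ₁, λ₂` with unit eigenvectors `e₁, e₂` (with `e₁ ≠ ±e₂`),
we have `|λ₁ - λ₂| ≤ 2C · min(‖e₂-e₁‖/‖e₁+e₂‖, ‖e₁+e₂‖/‖e₁-e₂‖)`. -/
theorem stmt0 (A : EuclideanSpace ℝ (Fin 2) →L[ℝ] EuclideanSpace ℝ (Fin 2)) (C : ℝ)
    (hC : ‖A‖ ≤ C) (lam₁ lam₂ : ℝ) (e₁ e₂ : EuclideanSpace ℝ (Fin 2))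
    (he₁ : ‖e₁‖ = 1) (he₂ : ‖e₂‖ = 1)
    (hAe₁ : A e₁ = lam₁ • e₁) (hAe₂ : A e₂ = lam₂ • e₂)
    (hne : e₁ ≠ e₂) (hne' : e₁ ≠ -e₂) :
    |lam₁ - lam₂| ≤ 2 * C * min (‖e₂ - e₁‖ / ‖e₁ + e₂‖) (‖e₁ + e₂‖ / ‖e₁ - e₂‖) :=
  stmt0_general A C hC lam₁ lam₂ e₁ e₂ he₁ he₂ hAe₁ hAe₂
end

section
/- Let U(t), S(t) be two C¹ families of symmetric n×n matrices each satisfying the Riccati equation Ġ + G·H_pp·G + G·H_qp + H_pq·G + H_qq = 0 along a common curve, and let δq(t) satisfy δq̇ = (H_qp + H_pp·U)δq. Then d/dt ( δqᵀ (U - S) δq ) = δqᵀ (U - S) H_pp (U - S) δq. In particular if H_pp is positive semidefinite, t ↦ δqᵀ(U-S)δq is nondecreasing. -/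
/-!
Along the flow `δq̇ = A δq` with `A = Hqp + Hpp U`, a quadratic form `δqᵀ W δq` has derivative
`δqᵀ (Aᵀ W + Ẇ + W A) δq`. For `W = U - S`, subtracting the two Riccati equations makes the
linear terms in `Hqp`, `Hpq` and the constant `Hqq` cancel, leaving `Aᵀ W + Ẇ + W A = W Hpp W`.
When `Hpp ⪰ 0` this is a congruence of a positive semidefinite matrix, so the derivative is
nonnegative.
-/

open Matrix

section Derivatives

variable {𝕜 ι κ : Type*} [NontriviallyNormedField 𝕜] [Fintype ι] {t : 𝕜}

theorem HasDerivAt.dotProduct {u w : 𝕜 → ι → 𝕜} {u' w' : ι → 𝕜}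
    (hu : HasDerivAt u u' t) (hw : HasDerivAt w w' t) :
    HasDerivAt (fun s => u s ⬝ᵥ w s) (u' ⬝ᵥ w t + u t ⬝ᵥ w') t := by
  have := HasDerivAt.fun_sum (u := Finset.univ) fun i _ =>
    (hasDerivAt_pi.mp hu i).fun_mul (hasDerivAt_pi.mp hw i)
  rwa [Finset.sum_add_distrib] at this

theorem HasDerivAt.mulVec {M : 𝕜 → Matrix κ ι 𝕜} {M' : Matrix κ ι 𝕜} {v : 𝕜 → ι → 𝕜}
    {v' : ι → 𝕜} (hM : ∀ i j, HasDerivAt (fun s => M s i j) (M' i j) t)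
    (hv : HasDerivAt v v' t) :
    HasDerivAt (fun s => M s *ᵥ v s) (M' *ᵥ v t + M t *ᵥ v') t :=
  hasDerivAt_pi.mpr fun i => (hasDerivAt_pi.mpr (hM i)).dotProduct hv

theorem HasDerivAt.dotProduct_mulVec_of_linear {W : 𝕜 → Matrix ι ι 𝕜} {W' A : Matrix ι ι 𝕜}
    {v : 𝕜 → ι → 𝕜} (hW : ∀ i j, HasDerivAt (fun s => W s i j) (W' i j) t)
    (hv : HasDerivAt v (A *ᵥ v t) t) :
    HasDerivAt (fun s => v s ⬝ᵥ W s *ᵥ v s) (v t ⬝ᵥ (Aᵀ * W t + W' + W t * A) *ᵥ v t) t := by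
  convert hv.dotProduct (HasDerivAt.mulVec hW hv) using 1
  rw [add_mulVec, add_mulVec, dotProduct_add, dotProduct_add, ← mulVec_mulVec, ← mulVec_mulVec,
    dotProduct_mulVec (v t) Aᵀ, vecMul_transpose, dotProduct_comm, add_assoc, dotProduct_add]

end Derivatives

theorem riccati_sub {R ι : Type*} [CommRing R] [Fintype ι]
    {Hpp Hqp Hpq Hqq U U' S S' : Matrix ι ι R}
    (hHpp : Hppᵀ = Hpp) (hHpq : Hpq = Hqpᵀ) (hU : Uᵀ = U)
    (hUric : U' + U * Hpp * U + U * Hqp + Hpq * U + Hqq = 0)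
    (hSric : S' + S * Hpp * S + S * Hqp + Hpq * S + Hqq = 0) :
    (Hqp + Hpp * U)ᵀ * (U - S) + (U' - S') + (U - S) * (Hqp + Hpp * U) =
      (U - S) * Hpp * (U - S) := by
  rw [transpose_add, transpose_mul, hU, hHpp, ← hHpq]
  calc _ = (U - S) * Hpp * (U - S) +
        ((U' + U * Hpp * U + U * Hqp + Hpq * U + Hqq) -
          (S' + S * Hpp * S + S * Hqp + Hpq * S + Hqq)) := by
        simp only [sub_mul, mul_sub, add_mul, mul_add, mul_assoc]
        abel
    _ = _ := by rw [hUric, hSric, sub_zero, add_zero]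

theorem stmt10_general (n : ℕ) (Hpp Hqp Hpq Hqq U U' S S' : ℝ → Matrix (Fin n) (Fin n) ℝ)
    (δq : ℝ → (Fin n → ℝ))
    (hHppsymm : ∀ t, (Hpp t).IsSymm)
    (hHpq : ∀ t, Hpq t = (Hqp t)ᵀ)
    (hUsymm : ∀ t, (U t).IsSymm) (hSsymm : ∀ t, (S t).IsSymm)
    (hU' : ∀ t i j, HasDerivAt (fun s => U s i j) (U' t i j) t)
    (hS' : ∀ t i j, HasDerivAt (fun s => S s i j) (S' t i j) t)
    (hUric : ∀ t, U' t + U t * Hpp t * U t + U t * Hqp t + Hpq t * U t + Hqq t = 0)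
    (hSric : ∀ t, S' t + S t * Hpp t * S t + S t * Hqp t + Hpq t * S t + Hqq t = 0)
    (hδq : ∀ t, HasDerivAt δq (((Hqp t + Hpp t * U t).mulVec (δq t))) t) :
    (∀ t, HasDerivAt (fun s => δq s ⬝ᵥ ((U s - S s).mulVec (δq s)))
        (δq t ⬝ᵥ (((U t - S t) * Hpp t * (U t - S t)).mulVec (δq t))) t) ∧
      ((∀ t, (Hpp t).PosSemidef) →
        Monotone fun t => δq t ⬝ᵥ ((U t - S t).mulVec (δq t))) := by
  have hderiv : ∀ t, HasDerivAt (fun s => δq s ⬝ᵥ ((U s - S s).mulVec (δq s)))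
      (δq t ⬝ᵥ (((U t - S t) * Hpp t * (U t - S t)).mulVec (δq t))) t := fun t => by
    rw [← riccati_sub (hHppsymm t).eq (hHpq t) (hUsymm t).eq (hUric t) (hSric t)]
    exact HasDerivAt.dotProduct_mulVec_of_linear (fun i j => (hU' t i j).sub (hS' t i j)) (hδq t)
  refine ⟨hderiv, fun hHpp => monotone_of_deriv_nonneg (fun t => (hderiv t).differentiableAt)
    fun t => ?_⟩
  have hW : (U t - S t)ᴴ = U t - S t := by
    rw [conjTranspose_eq_transpose_of_trivial, ((hUsymm t).sub (hSsymm t)).eq]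
  rw [(hderiv t).deriv]
  simpa only [hW, star_trivial] using ((hHpp t).conjTranspose_mul_mul_same (U t - S t)).dotProduct_mulVec_nonneg (δq t)

/-- Let `U(t), S(t)` be `C¹` families of symmetric matrices solving the same
Riccati equation `Ġ + G·Hpp·G + G·Hqp + Hpq·G + Hqq = 0` (with `Hpq = Hqpᵀ`, `Hpp, Hqq`
symmetric) and let `δq` solve `δq̇ = (Hqp + Hpp·U)δq`. Then
`d/dt (δqᵀ(U-S)δq) = δqᵀ(U-S)·Hpp·(U-S)δq`; in particular if `Hpp ≥ 0` then
`t ↦ δqᵀ(U-S)δq` is nondecreasing. -/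
theorem stmt10 (n : ℕ) (Hpp Hqp Hpq Hqq U U' S S' : ℝ → Matrix (Fin n) (Fin n) ℝ)
    (δq : ℝ → (Fin n → ℝ))
    (hHppsymm : ∀ t, (Hpp t).IsSymm) (hHqqsymm : ∀ t, (Hqq t).IsSymm)
    (hHpq : ∀ t, Hpq t = (Hqp t)ᵀ)
    (hUsymm : ∀ t, (U t).IsSymm) (hSsymm : ∀ t, (S t).IsSymm)
    (hU' : ∀ t i j, HasDerivAt (fun s => U s i j) (U' t i j) t)
    (hS' : ∀ t i j, HasDerivAt (fun s => S s i j) (S' t i j) t)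
    (hUric : ∀ t, U' t + U t * Hpp t * U t + U t * Hqp t + Hpq t * U t + Hqq t = 0)
    (hSric : ∀ t, S' t + S t * Hpp t * S t + S t * Hqp t + Hpq t * S t + Hqq t = 0)
    (hδq : ∀ t, HasDerivAt δq (((Hqp t + Hpp t * U t).mulVec (δq t))) t) :
    (∀ t, HasDerivAt (fun s => δq s ⬝ᵥ ((U s - S s).mulVec (δq s)))
        (δq t ⬝ᵥ (((U t - S t) * Hpp t * (U t - S t)).mulVec (δq t))) t) ∧
      ((∀ t, (Hpp t).PosSemidef) →
        Monotone fun t => δq t ⬝ᵥ ((U t - S t).mulVec (δq t))) :=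
  stmt10_general n Hpp Hqp Hpq Hqq U U' S S' δq hHppsymm hHpq hUsymm hSsymm hU' hS' hUric hSric hδq
end
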